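/- Let G=(V,E) be a circuit in the simple (2,2)-sparsity matroid and let v be a degree-3 vertex with N(v)={w,u,z}, where uz ∉ E, wu ∉ E and wz ∈ E. Then v is admissible: deleting v and adding either the edge wu or the edge uz yields a circuit in the simple (2,2)-sparsity matroid. -/

import Mathlib

variable {V : Type*}

/-- The number of edges of `G` induced by the vertex set `X`. -/
noncomputable def indEdges (G : SimpleGraph V) (X : Set V) : ℕ :=
  {e ∈ G.edgeSet | ∀ v ∈ e, v ∈ X}.ncard

/-- A circuit in the simple (2,2)-sparsity matroid: `|E| = 2|V| - 1` and every proper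
subset of vertices induces at most `2|X| - 2` edges. -/
def IsCircuit [Fintype V] (G : SimpleGraph V) : Prop :=
  (G.edgeSet.ncard : ℤ) = 2 * Fintype.card V - 1 ∧
  ∀ X : Finset V, X ⊂ Finset.univ → indEdges G ↑X ≤ 2 * X.card - 2

/-- The degree of a vertex. -/
noncomputable def deg (G : SimpleGraph V) (v : V) : ℕ := (G.neighborSet v).ncard


/-- The inverse Henneberg 2 move: delete the vertex `v` (and its incident edges)
and add the edge `pq` between two of its former neighbours. -/
def delAdd (G : SimpleGraph V) (v : V) (p q : {x : V // x ≠ v}) :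
    SimpleGraph {x : V // x ≠ v} :=
  SimpleGraph.fromEdgeSet
    ({e | ∃ x y : {x : V // x ≠ v}, G.Adj ↑x ↑y ∧ e = s(x, y)} ∪ {s(p, q)})

/-! ### Auxiliary lemmas -/

lemma indSet_inter' (G : SimpleGraph V) (A B : Set V) :
    {e ∈ G.edgeSet | ∀ v ∈ e, v ∈ A} ∩ {e ∈ G.edgeSet | ∀ v ∈ e, v ∈ B}
      = {e ∈ G.edgeSet | ∀ v ∈ e, v ∈ A ∩ B} := by
  ext e
  simp only [Set.mem_inter_iff, Set.mem_setOf_eq]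
  constructor
  · rintro ⟨⟨he, hA⟩, ⟨-, hB⟩⟩
    exact ⟨he, fun x hx => ⟨hA x hx, hB x hx⟩⟩
  · rintro ⟨he, h⟩
    exact ⟨⟨he, fun x hx => (h x hx).1⟩, ⟨he, fun x hx => (h x hx).2⟩⟩

lemma indEdges_supermod [Fintype V] [DecidableEq V] (G : SimpleGraph V) (A B : Set V)
    {a b : V} (hab : G.Adj a b) (haA : a ∈ A) (hbB : b ∈ B) (haB : a ∉ B) (hbA : b ∉ A) :
    indEdges G A + indEdges G B + 1 ≤ indEdges G (A ∪ B) + indEdges G (A ∩ B) := by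
  set SA := {e ∈ G.edgeSet | ∀ v ∈ e, v ∈ A}
  set SB := {e ∈ G.edgeSet | ∀ v ∈ e, v ∈ B}
  have hsum : indEdges G A + indEdges G B = (SA ∪ SB).ncard + (SA ∩ SB).ncard :=
    (Set.ncard_union_add_ncard_inter SA SB (Set.toFinite _) (Set.toFinite _)).symm
  have hAB : (SA ∩ SB).ncard = indEdges G (A ∩ B) := by
    rw [indSet_inter']; rfl
  have hmem : s(a, b) ∉ SA ∪ SB := by
    rintro (⟨-, h⟩ | ⟨-, h⟩)
    · exact hbA (h b (Sym2.mem_mk_right a b))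
    · exact haB (h a (Sym2.mem_mk_left a b))
  have hsub : insert s(a, b) (SA ∪ SB) ⊆ {e ∈ G.edgeSet | ∀ v ∈ e, v ∈ A ∪ B} := by
    rintro e (rfl | (⟨he, h⟩ | ⟨he, h⟩))
    · refine ⟨G.mem_edgeSet.2 hab, fun x hx => ?_⟩
      rcases Sym2.mem_iff.1 hx with rfl | rfl
      · exact Or.inl haA
      · exact Or.inr hbB
    · exact ⟨he, fun x hx => Or.inl (h x hx)⟩
    · exact ⟨he, fun x hx => Or.inr (h x hx)⟩
  have hle : (SA ∪ SB).ncard + 1 ≤ indEdges G (A ∪ B) := by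
    have := Set.ncard_le_ncard hsub (Set.toFinite _)
    rwa [Set.ncard_insert_of_notMem hmem (Set.toFinite _)] at this
  omega

lemma indEdges_insert_three [Fintype V] [DecidableEq V] (G : SimpleGraph V) (A : Set V)
    (v w u z : V) (hv : v ∉ A) (hw : w ∈ A) (hu : u ∈ A) (hz : z ∈ A)
    (hwu : w ≠ u) (hwz : w ≠ z) (huz : u ≠ z)
    (h1 : G.Adj v w) (h2 : G.Adj v u) (h3 : G.Adj v z) :
    indEdges G A + 3 ≤ indEdges G (insert v A) := by
  set SA := {e ∈ G.edgeSet | ∀ x ∈ e, x ∈ A}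
  have hnot : ∀ y : V, s(v, y) ∉ SA := fun y h => hv (h.2 v (Sym2.mem_mk_left v y))
  have hne : ∀ y y' : V, y ≠ y' → s(v, y) ≠ s(v, (y' : V)) := by
    intro y y' hyy' h
    exact hyy' (Sym2.congr_right.mp h)
  have hsub : insert s(v, w) (insert s(v, u) (insert s(v, z) SA))
      ⊆ {e ∈ G.edgeSet | ∀ x ∈ e, x ∈ insert v A} := by
    have hmm : ∀ (y : V), G.Adj v y → y ∈ A →
        s(v, y) ∈ {e ∈ G.edgeSet | ∀ x ∈ e, x ∈ insert v A} := by
      intro y hy hyA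
      refine ⟨G.mem_edgeSet.2 hy, fun x hx => ?_⟩
      rcases Sym2.mem_iff.1 hx with rfl | rfl
      · exact Set.mem_insert _ _
      · exact Set.mem_insert_of_mem _ hyA
    rintro e (rfl | rfl | rfl | ⟨he, h⟩)
    · exact hmm w h1 hw
    · exact hmm u h2 hu
    · exact hmm z h3 hz
    · exact ⟨he, fun x hx => Set.mem_insert_of_mem _ (h x hx)⟩
  have := Set.ncard_le_ncard hsub (Set.toFinite _)
  rwa [Set.ncard_insert_of_notMem (by
        simp only [Set.mem_insert_iff]
        push_neg
        exact ⟨hne w u hwu, hne w z hwz, hnot w⟩) (Set.toFinite _),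
      Set.ncard_insert_of_notMem (by
        simp only [Set.mem_insert_iff]
        push_neg
        exact ⟨hne u z huz, hnot u⟩) (Set.toFinite _),
      Set.ncard_insert_of_notMem (hnot z) (Set.toFinite _)] at this

lemma delAdd_edgeSet (G : SimpleGraph V) (v : V) (p q : {x : V // x ≠ v}) (hpq : p ≠ q)
    (e : Sym2 {x : V // x ≠ v}) :
    e ∈ (delAdd G v p q).edgeSet ↔
      (∃ x y : {x : V // x ≠ v}, G.Adj ↑x ↑y ∧ e = s(x, y)) ∨ e = s(p, q) := by
  rw [delAdd, SimpleGraph.edgeSet_fromEdgeSet]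
  constructor
  · rintro ⟨h | h, -⟩
    · exact Or.inl h
    · exact Or.inr h
  · intro h
    refine ⟨by rcases h with h | h; exacts [Or.inl h, Or.inr h], ?_⟩
    rcases h with ⟨x, y, hxy, rfl⟩ | rfl
    · simp only [Sym2.mem_diagSet, Sym2.mk_isDiag_iff]
      exact fun hd => hxy.ne (congrArg Subtype.val hd)
    · simp only [Sym2.mem_diagSet, Sym2.mk_isDiag_iff]
      exact hpq

lemma delAdd_image [Fintype V] [DecidableEq V] (G : SimpleGraph V) (v : V)
    (p q : {x : V // x ≠ v}) (hpq : p ≠ q)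
    (X : Set {x : V // x ≠ v}) :
    Sym2.map Subtype.val '' {e ∈ (delAdd G v p q).edgeSet | ∀ a ∈ e, a ∈ X}
      = {e ∈ G.edgeSet | ∀ a ∈ e, a ∈ Subtype.val '' X}
        ∪ {e | e = s((p : V), (q : V)) ∧ p ∈ X ∧ q ∈ X} := by
  ext e
  constructor
  · rintro ⟨e', ⟨he', hmem⟩, rfl⟩
    rcases (delAdd_edgeSet G v p q hpq e').1 he' with ⟨x, y, hxy, rfl⟩ | rfl
    · left
      rw [Sym2.map_pair_eq]
      refine ⟨G.mem_edgeSet.2 hxy, ?_⟩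
      intro a ha
      rcases Sym2.mem_iff.1 ha with rfl | rfl
      · exact ⟨x, hmem x (Sym2.mem_mk_left x y), rfl⟩
      · exact ⟨y, hmem y (Sym2.mem_mk_right x y), rfl⟩
    · right
      rw [Sym2.map_pair_eq]
      exact ⟨rfl, hmem p (Sym2.mem_mk_left p q), hmem q (Sym2.mem_mk_right p q)⟩
  · rintro (⟨he, hmem⟩ | ⟨rfl, hp, hq⟩)
    · induction e using Sym2.ind with
      | _ a b =>
        obtain ⟨x, hx, rfl⟩ := hmem a (Sym2.mem_mk_left a b)
        obtain ⟨y, hy, rfl⟩ := hmem b (Sym2.mem_mk_right _ b)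
        refine ⟨s(x, y), ⟨(delAdd_edgeSet G v p q hpq _).2
          (Or.inl ⟨x, y, G.mem_edgeSet.1 he, rfl⟩), ?_⟩, (Sym2.map_pair_eq _ _ _)⟩
        intro a ha
        rcases Sym2.mem_iff.1 ha with rfl | rfl
        exacts [hx, hy]
    · refine ⟨s(p, q), ⟨(delAdd_edgeSet G v p q hpq _).2 (Or.inr rfl), ?_⟩,
        (Sym2.map_pair_eq _ _ _)⟩
      intro a ha
      rcases Sym2.mem_iff.1 ha with rfl | rfl
      exacts [hp, hq]

lemma indEdges_delAdd_mem [Fintype V] [DecidableEq V] (G : SimpleGraph V) (v : V)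
    (p q : {x : V // x ≠ v}) (hpq : p ≠ q) (hnadj : ¬ G.Adj ↑p ↑q)
    (X : Set {x : V // x ≠ v}) (hp : p ∈ X) (hq : q ∈ X) :
    indEdges (delAdd G v p q) X = indEdges G (Subtype.val '' X) + 1 := by
  have hfinj : Function.Injective (Sym2.map (Subtype.val : {x : V // x ≠ v} → V)) :=
    Sym2.map.injective Subtype.val_injective
  have h1 : indEdges (delAdd G v p q) X
      = (Sym2.map Subtype.val '' {e ∈ (delAdd G v p q).edgeSet | ∀ a ∈ e, a ∈ X}).ncard :=
    (Set.ncard_image_of_injective _ hfinj).symm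
  rw [h1, delAdd_image G v p q hpq X]
  have : {e : Sym2 V | e = s((p : V), (q : V)) ∧ p ∈ X ∧ q ∈ X} = {s((p : V), (q : V))} := by
    ext e; simp [hp, hq]
  rw [this, Set.union_singleton,
    Set.ncard_insert_of_notMem (fun h => hnadj (G.mem_edgeSet.1 h.1)) (Set.toFinite _)]
  rfl

lemma indEdges_delAdd_not_mem [Fintype V] [DecidableEq V] (G : SimpleGraph V) (v : V)
    (p q : {x : V // x ≠ v}) (hpq : p ≠ q)
    (X : Set {x : V // x ≠ v}) (hp : ¬(p ∈ X ∧ q ∈ X)) :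
    indEdges (delAdd G v p q) X = indEdges G (Subtype.val '' X) := by
  have hfinj : Function.Injective (Sym2.map (Subtype.val : {x : V // x ≠ v} → V)) :=
    Sym2.map.injective Subtype.val_injective
  have h1 : indEdges (delAdd G v p q) X
      = (Sym2.map Subtype.val '' {e ∈ (delAdd G v p q).edgeSet | ∀ a ∈ e, a ∈ X}).ncard :=
    (Set.ncard_image_of_injective _ hfinj).symm
  rw [h1, delAdd_image G v p q hpq X]
  have : {e : Sym2 V | e = s((p : V), (q : V)) ∧ p ∈ X ∧ q ∈ X} = ∅ := by
    ext e; simp only [Set.mem_setOf_eq, Set.mem_empty_iff_false, iff_false, not_and]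
    exact fun _ h1 h2 => hp ⟨h1, h2⟩
  rw [this, Set.union_empty]
  rfl

lemma indEdges_univ' (G : SimpleGraph V) : indEdges G Set.univ = G.edgeSet.ncard := by
  unfold indEdges
  congr 1
  ext e
  simp

lemma indEdges_compl_vertex [Fintype V] [DecidableEq V] (G : SimpleGraph V) (v : V) :
    indEdges G {x | x ≠ v} + deg G v = G.edgeSet.ncard := by
  have hsplit : {e ∈ G.edgeSet | ∀ x ∈ e, x ∈ {x | x ≠ v}} ∪ {e ∈ G.edgeSet | v ∈ e}
      = G.edgeSet := by
    ext e
    constructor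
    · rintro (⟨he, -⟩ | ⟨he, -⟩) <;> exact he
    · intro he
      by_cases hv : v ∈ e
      · exact Or.inr ⟨he, hv⟩
      · exact Or.inl ⟨he, fun x hx hxv => hv (hxv ▸ hx)⟩
  have hdisj : Disjoint {e ∈ G.edgeSet | ∀ x ∈ e, x ∈ {x | x ≠ v}} {e ∈ G.edgeSet | v ∈ e} := by
    rw [Set.disjoint_left]
    rintro e ⟨-, h⟩ ⟨-, hv⟩
    exact h v hv rfl
  have hcard : deg G v = {e ∈ G.edgeSet | v ∈ e}.ncard := by
    have himg : (fun y => s(v, y)) '' G.neighborSet v = {e ∈ G.edgeSet | v ∈ e} := by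
      ext e
      constructor
      · rintro ⟨y, hy, rfl⟩
        exact ⟨G.mem_edgeSet.2 hy, Sym2.mem_mk_left v y⟩
      · rintro ⟨he, hv⟩
        obtain ⟨y, rfl⟩ := Sym2.mem_iff_exists.1 hv
        exact ⟨y, G.mem_edgeSet.1 he, rfl⟩
    rw [← himg, Set.ncard_image_of_injective _ (fun a b h => Sym2.congr_right.mp h)]
    rfl
  unfold indEdges
  rw [hcard, ← Set.ncard_union_eq hdisj (Set.toFinite _) (Set.toFinite _), hsplit]

lemma card_subtype_ne [Fintype V] [DecidableEq V] (v : V) :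
    Fintype.card {x : V // x ≠ v} + 1 = Fintype.card V := by
  have : Fintype.card {x : V // ¬ (x = v)} = Fintype.card V - Fintype.card {x : V // x = v} :=
    Fintype.card_subtype_compl _
  simp only [Fintype.card_subtype_eq, ne_eq] at this ⊢
  have hle : 1 ≤ Fintype.card V := Fintype.card_pos_iff.2 ⟨v⟩
  omega

/-- A node `v` with neighbours `w, u, z` such that `uz, wu ∉ E` and `wz ∈ E` is
admissible: deleting `v` and adding either `wu` or `uz` yields a circuit. -/
theorem node_admissible_one_edge [Fintype V] [DecidableEq V]
    (G : SimpleGraph V) (hG : IsCircuit G)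
    (v : V) (w u z : {x : V // x ≠ v})
    (hdeg : deg G v = 3)
    (hN : G.neighborSet v = {↑w, ↑u, ↑z})
    (hwu' : w ≠ u) (hwz' : w ≠ z) (huz' : u ≠ z)
    (huz : ¬ G.Adj ↑u ↑z) (hwu : ¬ G.Adj ↑w ↑u) (hwz : G.Adj ↑w ↑z) :
    IsCircuit (delAdd G v w u) ∨ IsCircuit (delAdd G v u z) := by
  classical
  obtain ⟨hGcount, hGsparse⟩ := hG
  have hvw : G.Adj v ↑w := by
    rw [← SimpleGraph.mem_neighborSet, hN]; simp
  have hvu : G.Adj v ↑u := by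
    rw [← SimpleGraph.mem_neighborSet, hN]; simp
  have hvz : G.Adj v ↑z := by
    rw [← SimpleGraph.mem_neighborSet, hN]; simp
  have hcards : Fintype.card {x : V // x ≠ v} + 1 = Fintype.card V := card_subtype_ne v
  have hcompl := indEdges_compl_vertex G v
  rw [hdeg] at hcompl
  -- edge count of the modified graphs
  have count : ∀ p q : {x : V // x ≠ v}, p ≠ q → ¬ G.Adj ↑p ↑q →
      (((delAdd G v p q).edgeSet.ncard : ℤ)
        = 2 * (Fintype.card {x : V // x ≠ v} : ℤ) - 1) := by
    intro p q hpq hnadj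
    have h1 : indEdges (delAdd G v p q) Set.univ
        = indEdges G (Subtype.val '' Set.univ) + 1 :=
      indEdges_delAdd_mem G v p q hpq hnadj _ trivial trivial
    rw [indEdges_univ'] at h1
    have himg : (Subtype.val '' (Set.univ : Set {x : V // x ≠ v})) = {x : V | x ≠ v} := by
      rw [Set.image_univ, Subtype.range_coe_subtype]
    rw [himg] at h1
    omega
  -- extraction of a critical set from a failed move
  have key : ∀ p q : {x : V // x ≠ v}, p ≠ q → ¬ G.Adj ↑p ↑q →
      ¬ IsCircuit (delAdd G v p q) →
      ∃ A : Finset V, v ∉ A ∧ ↑p ∈ A ∧ ↑q ∈ A ∧ insert v A ⊂ Finset.univ ∧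
        indEdges G ↑A + 2 = 2 * A.card := by
    intro p q hpq hnadj hnc
    rw [IsCircuit] at hnc
    push_neg at hnc
    obtain ⟨X, hXss, hXviol⟩ := hnc (count p q hpq hnadj)
    set A : Finset V := X.map ⟨Subtype.val, Subtype.val_injective⟩ with hA
    have hAcoe : (↑A : Set V) = Subtype.val '' (↑X : Set {x : V // x ≠ v}) :=
      Finset.coe_map _ X
    have hcA : A.card = X.card := Finset.card_map _
    have hvA : v ∉ A := by
      intro hv
      obtain ⟨x, -, hx⟩ := Finset.mem_map.1 hv
      exact x.2 hx
    have hmemA : ∀ r : {x : V // x ≠ v}, ((r : V) ∈ A) ↔ r ∈ X := fun r =>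
      Finset.mem_map' _
    have hAss : A ⊂ Finset.univ :=
      Finset.ssubset_univ_iff.2 (fun h => hvA (h ▸ Finset.mem_univ v))
    have hGA : indEdges G ↑A ≤ 2 * A.card - 2 := hGsparse A hAss
    by_cases hc : p ∈ X ∧ q ∈ X
    · obtain ⟨hp, hq⟩ := hc
      have heq : indEdges (delAdd G v p q) ↑X = indEdges G ↑A + 1 := by
        rw [hAcoe]
        exact indEdges_delAdd_mem G v p q hpq hnadj _ hp hq
      have hp' : (p : V) ∈ A := (hmemA p).2 hp
      have hq' : (q : V) ∈ A := (hmemA q).2 hq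
      have h2A : 2 ≤ A.card := Finset.one_lt_card.2
        ⟨(p : V), hp', (q : V), hq', fun h => hpq (Subtype.ext h)⟩
      obtain ⟨y, -, hy⟩ := Finset.exists_of_ssubset hXss
      have hyins : (y : V) ∉ insert v A := by
        rw [Finset.mem_insert]
        rintro (h | h)
        · exact y.2 h
        · exact hy ((hmemA y).1 h)
      have hins : insert v A ⊂ Finset.univ :=
        Finset.ssubset_univ_iff.2 (fun h => hyins (h ▸ Finset.mem_univ _))
      exact ⟨A, hvA, hp', hq', hins, by omega⟩
    · exfalso
      have heq : indEdges (delAdd G v p q) ↑X = indEdges G ↑A := by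
        rw [hAcoe]
        refine indEdges_delAdd_not_mem G v p q hpq _ ?_
        simpa using hc
      omega
  by_contra hcon
  push_neg at hcon
  obtain ⟨A1, hvA1, hwA1, huA1, hins1, hcrit1⟩ := key w u hwu' hwu hcon.1
  obtain ⟨A2, hvA2, huA2, hzA2, hins2, hcrit2⟩ := key u z huz' huz hcon.2
  have hwune : (w : V) ≠ (u : V) := fun h => hwu' (Subtype.ext h)
  have hwzne : (w : V) ≠ (z : V) := fun h => hwz' (Subtype.ext h)
  have huzne : (u : V) ≠ (z : V) := fun h => huz' (Subtype.ext h)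
  -- z ∉ A1
  have hz1 : (z : V) ∉ A1 := by
    intro hz1
    have h3 := indEdges_insert_three G ↑A1 v ↑w ↑u ↑z hvA1 hwA1 huA1 hz1
      hwune hwzne huzne hvw hvu hvz
    have hsp := hGsparse (insert v A1) hins1
    rw [Finset.coe_insert] at hsp
    have hcardins : (insert v A1).card = A1.card + 1 := Finset.card_insert_of_notMem hvA1
    omega
  -- w ∉ A2
  have hw2 : (w : V) ∉ A2 := by
    intro hw2
    have h3 := indEdges_insert_three G ↑A2 v ↑w ↑u ↑z hvA2 hw2 huA2 hzA2
      hwune hwzne huzne hvw hvu hvz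
    have hsp := hGsparse (insert v A2) hins2
    rw [Finset.coe_insert] at hsp
    have hcardins : (insert v A2).card = A2.card + 1 := Finset.card_insert_of_notMem hvA2
    omega
  -- supermodularity with the crossing edge wz
  have hsup := indEdges_supermod G ↑A1 ↑A2 hwz hwA1 hzA2 hw2 hz1
  have hvU : v ∉ A1 ∪ A2 := by
    rw [Finset.mem_union]; rintro (h | h); exacts [hvA1 h, hvA2 h]
  have hU := hGsparse (A1 ∪ A2)
    (Finset.ssubset_univ_iff.2 (fun h => hvU (h ▸ Finset.mem_univ v)))
  have hI := hGsparse (A1 ∩ A2)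
    (Finset.ssubset_univ_iff.2
      (fun h => hvA1 (Finset.mem_inter.1 (h ▸ Finset.mem_univ v)).1))
  rw [Finset.coe_union] at hU
  rw [Finset.coe_inter] at hI
  have hcardsUI : (A1 ∪ A2).card + (A1 ∩ A2).card = A1.card + A2.card :=
    Finset.card_union_add_card_inter A1 A2
  have hIpos : 1 ≤ (A1 ∩ A2).card :=
    Finset.card_pos.2 ⟨(u : V), Finset.mem_inter.2 ⟨huA1, huA2⟩⟩
  have hUpos : 1 ≤ (A1 ∪ A2).card :=
    Finset.card_pos.2 ⟨(u : V), Finset.mem_union.2 (Or.inl huA1)⟩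
  omega
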